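/- Suppose Φ satisfies the squared-form RIC with parameters (s, δ), δ < 1, and T is a set with |T| ≤ s. For the least-squares solution b|_T = Φ_T† u with u = Φx + e and supp(x) ⊆ T, one has ‖b|_T − x|_T‖₂ ≤ ‖e‖₂ / (1−δ). -/

import Mathlib

/-! The error `v = b - x` is supported on `T`, and the normal equations say that the residual
`u - Φ b = e - Φ v` is orthogonal to `Φ v`. Hence `‖Φ v‖² = ⟨Φ v, e⟩ ≤ ‖Φ v‖ ‖e‖`, i.e.
`‖Φ v‖ ≤ ‖e‖`, and the lower RIC bound gives `(1 - δ) ‖v‖² ≤ ‖e‖²`. Since the RIC forces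
`0 ≤ δ` as soon as some nonzero sparse vector exists, `(1 - δ)² ≤ 1 - δ` and the claim follows. -/

open Finset

/-- The ℓ₂ norm on ℝ^N. -/
noncomputable def l2 {N : ℕ} (v : Fin N → ℝ) : ℝ := Real.sqrt (∑ i, v i ^ 2)

/-- The ℓ₁ norm on ℝ^N. -/
def l1 {N : ℕ} (v : Fin N → ℝ) : ℝ := ∑ i, |v i|

/-- A vector is `s`-sparse if it has at most `s` nonzero coordinates. -/
def Sparse {N : ℕ} (s : ℕ) (v : Fin N → ℝ) : Prop :=
  (Finset.univ.filter fun j => v j ≠ 0).card ≤ s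

/-- Restricted isometry condition with parameters (n, δ). -/
def RIC {m N : ℕ} (Φ : Matrix (Fin m) (Fin N) ℝ) (n : ℕ) (δ : ℝ) : Prop :=
  ∀ v : Fin N → ℝ, Sparse n v →
    (1 - δ) * l2 v ≤ l2 (Φ.mulVec v) ∧ l2 (Φ.mulVec v) ≤ (1 + δ) * l2 v

/-- Squared-form restricted isometry condition with parameters (n, δ). -/
def RICsq {m N : ℕ} (Φ : Matrix (Fin m) (Fin N) ℝ) (n : ℕ) (δ : ℝ) : Prop :=
  ∀ v : Fin N → ℝ, Sparse n v →
    (1 - δ) * (l2 v) ^ 2 ≤ (l2 (Φ.mulVec v)) ^ 2 ∧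
    (l2 (Φ.mulVec v)) ^ 2 ≤ (1 + δ) * (l2 v) ^ 2

/-- `xs` is the vector keeping the `s` largest-magnitude coordinates of `x`
(other coordinates set to 0). -/
def IsLargest {N : ℕ} (s : ℕ) (x xs : Fin N → ℝ) : Prop :=
  ∃ T : Finset (Fin N), T.card = min s N ∧
    (∀ i, xs i = if i ∈ T then x i else 0) ∧
    ∀ i ∈ T, ∀ j ∉ T, |x j| ≤ |x i|

open Matrix

lemma l2_nonneg {N : ℕ} (v : Fin N → ℝ) : 0 ≤ l2 v := Real.sqrt_nonneg _

lemma l2_sq {N : ℕ} (v : Fin N → ℝ) : l2 v ^ 2 = v ⬝ᵥ v := by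
  rw [l2, Real.sq_sqrt (by positivity)]
  simp only [dotProduct, sq]

lemma dotProduct_le_l2_mul_l2 {N : ℕ} (v w : Fin N → ℝ) : v ⬝ᵥ w ≤ l2 v * l2 w :=
  Real.sum_mul_le_sqrt_mul_sqrt _ _ _

lemma sparse_of_support_subset {N s : ℕ} {T : Finset (Fin N)} {v : Fin N → ℝ}
    (hv : ∀ i ∉ T, v i = 0) (hT : T.card ≤ s) : Sparse s v := by
  refine le_trans (Finset.card_le_card fun i hi => ?_) hT
  by_contra hiT
  exact (Finset.mem_filter.mp hi).2 (hv i hiT)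

lemma RICsq.nonneg {m N s : ℕ} {Φ : Matrix (Fin m) (Fin N) ℝ} {δ : ℝ} (h : RICsq Φ s δ)
    {v : Fin N → ℝ} (hv : Sparse s v) (hv0 : 0 < l2 v) : 0 ≤ δ := by
  obtain ⟨hlow, hup⟩ := h v hv
  nlinarith [pow_pos hv0 2]

lemma dotProduct_eq_zero_of_disjoint_support {ι : Type*} [Fintype ι] {T : Finset ι} {v w : ι → ℝ}
    (hv : ∀ i ∉ T, v i = 0) (hw : ∀ i ∈ T, w i = 0) : v ⬝ᵥ w = 0 :=
  Finset.sum_eq_zero fun i _ => by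
    by_cases hi : i ∈ T
    · rw [hw i hi, mul_zero]
    · rw [hv i hi, zero_mul]

lemma l2_mulVec_le_of_normal_eq {m N : ℕ} {Φ : Matrix (Fin m) (Fin N) ℝ} {T : Finset (Fin N)}
    {v : Fin N → ℝ} {e : Fin m → ℝ} (hv : ∀ i ∉ T, v i = 0)
    (hnormal : ∀ j ∈ T, (Φᵀ *ᵥ (e - Φ *ᵥ v)) j = 0) : l2 (Φ *ᵥ v) ≤ l2 e := by
  have horth : (Φ *ᵥ v) ⬝ᵥ (e - Φ *ᵥ v) = 0 := by
    rw [dotProduct_comm, dotProduct_mulVec, ← mulVec_transpose, dotProduct_comm]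
    exact dotProduct_eq_zero_of_disjoint_support hv hnormal
  have hsq : l2 (Φ *ᵥ v) ^ 2 ≤ l2 (Φ *ᵥ v) * l2 e := by
    rw [dotProduct_sub, sub_eq_zero] at horth
    rw [l2_sq, ← horth]
    exact dotProduct_le_l2_mul_l2 _ _
  nlinarith [l2_nonneg (Φ *ᵥ v), l2_nonneg e]

/-- The least-squares estimation step: `b` is supported on `T` and satisfies the
normal equations `Φ_T^* (u - Φ b) = 0`, i.e. `b|_T = Φ_T† u`. -/
theorem least_squares_estimate {m N s : ℕ} (Φ : Matrix (Fin m) (Fin N) ℝ) (δ : ℝ)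
    (hδ : δ < 1) (h : RICsq Φ s δ) (T : Finset (Fin N)) (hT : T.card ≤ s)
    (x b : Fin N → ℝ) (e u : Fin m → ℝ)
    (hx : ∀ i, x i ≠ 0 → i ∈ T) (hu : u = Φ.mulVec x + e)
    (hbsupp : ∀ i, i ∉ T → b i = 0)
    (hnormal : ∀ j ∈ T, Φ.transpose.mulVec (u - Φ.mulVec b) j = 0) :
    l2 (b - x) ≤ l2 e / (1 - δ) := by
  set v := b - x with hv
  have hvT : ∀ i ∉ T, v i = 0 := fun i hi => by
    simp [v, hbsupp i hi, not_imp_comm.mp (hx i) hi]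
  have hresidual : u - Φ *ᵥ b = e - Φ *ᵥ v := by
    rw [hu, hv, mulVec_sub]
    abel
  have hΦv : l2 (Φ *ᵥ v) ≤ l2 e := l2_mulVec_le_of_normal_eq hvT (hresidual ▸ hnormal)
  have hsparse : Sparse s v := sparse_of_support_subset hvT hT
  rw [le_div_iff₀ (by linarith)]
  rcases (l2_nonneg v).eq_or_lt with hv0 | hvpos
  · rw [← hv0, zero_mul]
    exact l2_nonneg e
  · have hδ0 : 0 ≤ δ := h.nonneg hsparse hvpos
    have hlow : (1 - δ) * l2 v ^ 2 ≤ l2 (Φ *ᵥ v) ^ 2 := (h v hsparse).1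
    refine le_of_pow_le_pow_left₀ two_ne_zero (l2_nonneg e) ?_
    nlinarith [pow_le_pow_left₀ (l2_nonneg _) hΦv 2, sq_nonneg (l2 v)]
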